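/- Let h: ℂ → ℂ be a map with h(0) = 0 that is real-differentiable at 0, with real derivative at 0 given by z ↦ a·z + b·conj(z) for complex numbers a, b. Suppose there exists a sequence (λₙ) of nonzero complex numbers with |λₙ| → ∞ such that for every z in some neighbourhood of 0 the sequence gₙ(z) := λₙ · h(z / λₙ) converges to g(z), where g: ℂ → ℂ is ℂ-linear. Then b = 0; that is, the derivative of h at 0 is ℂ-linear. -/

import Mathlib

open Filter Complex

/-- Blow-up argument: if the rescalings `λₙ · h(z/λₙ)` of a real-differentiable
map `h` with `h 0 = 0` converge to a `ℂ`-linear map on a neighbourhood of `0`,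
with `|λₙ| → ∞`, then the antiholomorphic part of the derivative of `h` at `0`
vanishes. -/
theorem blowup_forces_conformal_derivative
    (h : ℂ → ℂ) (h0 : h 0 = 0)
    (a b : ℂ) (D : ℂ →L[ℝ] ℂ)
    (hD : ∀ z : ℂ, D z = a * z + b * (starRingEnd ℂ) z)
    (hdiff : HasFDerivAt h D 0)
    (lam : ℕ → ℂ) (hlam : ∀ n, lam n ≠ 0)
    (hlam_top : Tendsto (fun n => ‖lam n‖) atTop atTop)
    (g : ℂ →ₗ[ℂ] ℂ) (ε : ℝ) (hε : 0 < ε)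
    (hconv : ∀ z : ℂ, ‖z‖ < ε →
      Tendsto (fun n => lam n * h (z / lam n)) atTop (nhds (g z))) :
    b = 0 := by
  have hconj : ∀ n, (starRingEnd ℂ) (lam n) ≠ 0 := by
    intro n; simpa using hlam n
  set μ : ℕ → ℂ := fun n => lam n / (starRingEnd ℂ) (lam n) with hμ
  have habsμ : ∀ n, ‖μ n‖ = 1 := by
    intro n
    have : ‖lam n‖ ≠ 0 := by simpa using hlam n
    simp [hμ, norm_div, Complex.norm_conj, div_self this]
  -- key convergence
  have key : ∀ z : ℂ, ‖z‖ < ε →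
      Tendsto (fun n => b * μ n * (starRingEnd ℂ) z) atTop (nhds (g z - a * z)) := by
    intro z hz
    have hw : Tendsto (fun n => z / lam n) atTop (nhds 0) := by
      rw [tendsto_zero_iff_norm_tendsto_zero]
      simpa [norm_div] using tendsto_const_nhds.div_atTop hlam_top
    have hlo : (fun w : ℂ => h w - D w) =o[nhds 0] (fun w : ℂ => w) := by
      simpa [h0] using hdiff.isLittleO
    have hcomp := hlo.comp_tendsto hw
    have hmul : (fun n => lam n * (h (z / lam n) - D (z / lam n))) =o[atTop]
        (fun n => lam n * (z / lam n)) :=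
      (Asymptotics.isBigO_refl lam atTop).mul_isLittleO hcomp
    have heq : (fun n => lam n * (z / lam n)) = fun _ : ℕ => z := by
      funext n; rw [mul_comm, div_mul_cancel₀ _ (hlam n)]
    rw [heq] at hmul
    have htend0 : Tendsto (fun n => lam n * (h (z / lam n) - D (z / lam n)))
        atTop (nhds 0) := by
      rw [← Asymptotics.isLittleO_one_iff ℝ]
      exact hmul.trans_isBigO (Asymptotics.isBigO_const_const z one_ne_zero atTop)
    have hDe : ∀ n, lam n * D (z / lam n) = a * z + b * μ n * (starRingEnd ℂ) z := by
      intro n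
      rw [hD]
      have : (starRingEnd ℂ) (z / lam n) = (starRingEnd ℂ) z / (starRingEnd ℂ) (lam n) :=
        map_div₀ _ _ _
      rw [this, hμ]
      field_simp [hlam n, hconj n]
    have : Tendsto (fun n => lam n * h (z / lam n)
        - lam n * (h (z / lam n) - D (z / lam n)) - a * z) atTop (nhds (g z - 0 - a * z)) :=
      ((hconv z hz).sub htend0).sub tendsto_const_nhds
    have heq2 : (fun n => lam n * h (z / lam n)
        - lam n * (h (z / lam n) - D (z / lam n)) - a * z)
        = fun n => b * μ n * (starRingEnd ℂ) z := by
      funext n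
      have := hDe n
      ring_nf
      ring_nf at this
      linear_combination this
    rw [heq2] at this
    simpa using this
  -- apply at two points
  set t : ℂ := ((ε / 2 : ℝ) : ℂ) with ht
  have habst : ‖t‖ = ε / 2 := by
    rw [ht, Complex.norm_real, Real.norm_eq_abs, abs_of_pos (by linarith)]
  have ht1 : ‖t‖ < ε := by rw [habst]; linarith
  have ht2 : ‖t * I‖ < ε := by
    rw [norm_mul, Complex.norm_I, mul_one]; exact ht1
  have hct : (starRingEnd ℂ) t = t := by rw [ht, Complex.conj_ofReal]
  have k1 := key t ht1
  rw [hct] at k1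
  have k2 := key (t * I) ht2
  have hcti : (starRingEnd ℂ) (t * I) = -(t * I) := by
    rw [map_mul, hct, Complex.conj_I]; ring
  rw [hcti] at k2
  have hg : g (t * I) = I * g t := by
    have : t * I = I • t := by simp [smul_eq_mul]; ring
    rw [this, map_smul, smul_eq_mul]
  have k2' : Tendsto (fun n => b * μ n * t) atTop (nhds (-(I⁻¹ * (g (t * I) - a * (t * I)))) ) := by
    have := k2.const_mul (-(I⁻¹))
    have heq3 : (fun n => -(I⁻¹) * (b * μ n * -(t * I))) = fun n => b * μ n * t := by
      funext n
      rw [Complex.inv_I]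
      linear_combination (-(b * μ n * t)) * Complex.I_sq
    rw [heq3] at this
    simpa [mul_comm] using this
  have huniq := tendsto_nhds_unique k1 k2'
  -- show g t - a * t = 0
  have hL : g t - a * t = 0 := by
    rw [hg, Complex.inv_I] at huniq
    linear_combination (1/2 : ℂ) * huniq + ((g t - a * t)/2) * Complex.I_sq
  rw [hL] at k1
  -- abs of constant sequence
  have habs : Tendsto (fun n => ‖b * μ n * t‖) atTop (nhds 0) := by
    simpa using k1.norm
  have hconst : (fun n => ‖b * μ n * t‖) = fun _ => ‖b‖ * (ε / 2) := by
    funext n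
    rw [norm_mul, norm_mul, habsμ n, habst, mul_one]
  rw [hconst] at habs
  have := tendsto_nhds_unique habs tendsto_const_nhds
  have hb : ‖b‖ = 0 := by
    rcases mul_eq_zero.mp this.symm with h' | h'
    · exact h'
    · linarith
  exact norm_eq_zero.mp hb
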